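/- arXiv:2307.02932 — 5 statements merged into one kernel-verified Lean document; each statement's English description precedes it below -/
import Mathlib

section
/- Let f* = f̄ be the conditional-mean regressor and r*(x) = 1{R(f*,x) ≤ c} the rejector that accepts exactly when the conditional risk of f* is at most c. Then for every measurable regressor f : 𝒳 → ℝ and every measurable rejector r : 𝒳 → {0,1}, L_RwR(f*, r*) ≤ L_RwR(f, r); i.e., the pair (f*, r*) minimizes the RwR loss over all measurable regressor–rejector pairs. -/
/-! For a fixed regressor `f` with conditional risk `R`, the tower property turns the loss of a
rejector `ρ` into `E[ρ R + (1 - ρ) c]`, which is at least `E[min(R, c)]`, with equality for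
`ρ = 1{R ≤ c}`. For a fixed rejector `ρ`, the cross term `E[ρ (f - f̄)(f̄ - Y)]` vanishes because
`E[f̄ - Y | X] = 0`, so `E[ρ (f - Y)²] = E[ρ (f̄ - Y)²] + E[ρ (f - f̄)²] ≥ E[ρ (f̄ - Y)²]`. -/

open MeasureTheory

noncomputable section

/-- The regression-with-rejection (RwR) loss
`L_RwR(f,r) = E[ r(X)·(f(X)−Y)² + (1−r(X))·c ]`. -/
def LRwR {Ω : Type*} [MeasurableSpace Ω] {d : ℕ} (μ : Measure Ω)
    (X : Ω → EuclideanSpace ℝ (Fin d)) (Y : Ω → ℝ) (c : ℝ)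
    (f r : EuclideanSpace ℝ (Fin d) → ℝ) : ℝ :=
  ∫ ω, r (X ω) * (f (X ω) - Y ω) ^ 2 + (1 - r (X ω)) * c ∂μ

/-- `g : 𝒳 → ℝ` is a measurable version of the conditional expectation
`E[Z | X]`, i.e. `g(X) = E[Z | σ(X)]` a.s. -/
def IsCondMean {Ω : Type*} [MeasurableSpace Ω] {d : ℕ} (μ : Measure Ω)
    (X : Ω → EuclideanSpace ℝ (Fin d)) (Z : Ω → ℝ)
    (g : EuclideanSpace ℝ (Fin d) → ℝ) : Prop :=
  (fun ω => g (X ω)) =ᵐ[μ] μ[Z | MeasurableSpace.comap X inferInstance]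

open Set

theorem norm_and_norm_one_sub_le_one_of_mem_Icc {t : ℝ} (ht : t ∈ Icc (0 : ℝ) 1) :
    ‖t‖ ≤ 1 ∧ ‖1 - t‖ ≤ 1 := by
  simp only [Real.norm_eq_abs, abs_le]
  exact ⟨⟨by linarith [ht.1], ht.2⟩, ⟨by linarith [ht.2], by linarith [ht.1]⟩⟩

section CondExp

variable {Ω : Type*} {m m₀ : MeasurableSpace Ω} {μ : Measure[m₀] Ω}

theorem integral_mul_eq_integral_mul_condExp (hm : m ≤ m₀) [SigmaFinite (μ.trim hm)]
    {g Z : Ω → ℝ} (hg : StronglyMeasurable[m] g) (hgZ : Integrable (g * Z) μ)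
    (hZ : Integrable Z μ) :
    ∫ ω, g ω * Z ω ∂μ = ∫ ω, g ω * μ[Z | m] ω ∂μ :=
  (integral_condExp hm).symm.trans
    (integral_congr_ae (condExp_mul_of_stronglyMeasurable_left hg hgZ hZ))

theorem integral_mul_sq_sub_eq_add_of_condExp (hm : m ≤ m₀) [IsFiniteMeasure μ]
    {ρ a b Y : Ω → ℝ} {C : ℝ} (hρ : StronglyMeasurable[m] ρ) (hρC : ∀ ω, ‖ρ ω‖ ≤ C)
    (ha : StronglyMeasurable[m] a) (hb : StronglyMeasurable[m] b)
    (haY : MemLp (a - Y) 2 μ) (hbY : MemLp (b - Y) 2 μ) (hcond : a =ᵐ[μ] μ[Y | m]) :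
    ∫ ω, ρ ω * (b ω - Y ω) ^ 2 ∂μ
      = ∫ ω, ρ ω * (a ω - Y ω) ^ 2 ∂μ + ∫ ω, ρ ω * (b ω - a ω) ^ 2 ∂μ := by
  have hρ' : AEStronglyMeasurable ρ μ := (hρ.mono hm).aestronglyMeasurable
  have ha_int : Integrable a μ := integrable_condExp.congr hcond.symm
  have hY_int : Integrable Y μ := by
    simpa using ha_int.sub (haY.integrable one_le_two)
  have hcond_zero : μ[a - Y | m] =ᵐ[μ] 0 := by
    filter_upwards [condExp_sub ha_int hY_int m, hcond] with ω h h'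
    simp [h, condExp_of_stronglyMeasurable hm ha ha_int, h']
  have hba : MemLp (b - a) 2 μ := by simpa using hbY.sub haY
  have hρba : MemLp (ρ * (b - a)) 2 μ :=
    hba.mul (memLp_top_of_bound hρ' C (ae_of_all _ hρC))
  have hcross_int : Integrable (fun ω => ρ ω * (b ω - a ω) * (a ω - Y ω)) μ :=
    hρba.integrable_mul haY
  have hcross : ∫ ω, ρ ω * (b ω - a ω) * (a ω - Y ω) ∂μ = 0 := by
    refine (integral_mul_eq_integral_mul_condExp (Z := a - Y) hm (hρ.mul (hb.sub ha)) hcross_int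
      (haY.integrable one_le_two)).trans ?_
    exact integral_eq_zero_of_ae (by filter_upwards [hcond_zero] with ω h; simp [h])
  have hint : ∀ {h : Ω → ℝ}, MemLp h 2 μ → Integrable (fun ω => ρ ω * h ω ^ 2) μ :=
    fun h => h.integrable_sq.bdd_mul hρ' (ae_of_all _ hρC)
  have hsplit : ∀ ω, ρ ω * (b ω - Y ω) ^ 2
      = ρ ω * (a ω - Y ω) ^ 2 + (ρ ω * (b ω - a ω) ^ 2 + 2 * (ρ ω * (b ω - a ω) * (a ω - Y ω))) :=
    fun ω => by ring
  simp_rw [hsplit]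
  rw [integral_add, integral_add, integral_const_mul, hcross, mul_zero, add_zero]
  exacts [hint hba, hcross_int.const_mul 2, hint haY, (hint hba).add (hcross_int.const_mul 2)]

end CondExp

section LRwR

variable {Ω : Type*} {d : ℕ} {X : Ω → EuclideanSpace ℝ (Fin d)}

theorem stronglyMeasurable_comp_comap {g : EuclideanSpace ℝ (Fin d) → ℝ} (hg : Measurable g) :
    StronglyMeasurable[MeasurableSpace.comap X inferInstance] (fun ω => g (X ω)) :=
  (hg.comp (comap_measurable X)).stronglyMeasurable

variable [MeasurableSpace Ω] {μ : Measure Ω}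

theorem IsCondMean.integrable {Z : Ω → ℝ} {g : EuclideanSpace ℝ (Fin d) → ℝ}
    (h : IsCondMean μ X Z g) : Integrable (fun ω => g (X ω)) μ :=
  integrable_condExp.congr h.symm

variable [IsFiniteMeasure μ] {Y : Ω → ℝ} {c : ℝ} {f ρ : EuclideanSpace ℝ (Fin d) → ℝ}

theorem integrable_rejector_mul_and_one_sub_mul (hX : Measurable X) (hρ : Measurable ρ)
    (hρ01 : ∀ x, ρ x ∈ Icc (0 : ℝ) 1) {W : Ω → ℝ} (hW : Integrable W μ) :
    Integrable (fun ω => ρ (X ω) * W ω) μ ∧ Integrable (fun ω => (1 - ρ (X ω)) * c) μ :=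
  ⟨hW.bdd_mul (hρ.comp hX).aestronglyMeasurable
      (ae_of_all _ fun _ => (norm_and_norm_one_sub_le_one_of_mem_Icc (hρ01 _)).1),
    (integrable_const c).bdd_mul (measurable_const.sub (hρ.comp hX)).aestronglyMeasurable
      (ae_of_all _ fun _ => (norm_and_norm_one_sub_le_one_of_mem_Icc (hρ01 _)).2)⟩

theorem LRwR_eq_integral_condRisk (hX : Measurable X) (hρ : Measurable ρ)
    (hρ01 : ∀ x, ρ x ∈ Icc (0 : ℝ) 1) (hf2 : Integrable (fun ω => (f (X ω) - Y ω) ^ 2) μ)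
    {R : EuclideanSpace ℝ (Fin d) → ℝ} (hR : IsCondMean μ X (fun ω => (f (X ω) - Y ω) ^ 2) R) :
    LRwR μ X Y c f ρ = ∫ ω, ρ (X ω) * R (X ω) + (1 - ρ (X ω)) * c ∂μ := by
  obtain ⟨hρZ, hρc⟩ := integrable_rejector_mul_and_one_sub_mul (c := c) hX hρ hρ01 hf2
  have hρR := (integrable_rejector_mul_and_one_sub_mul (c := c) hX hρ hρ01 hR.integrable).1
  rw [LRwR, integral_add hρZ hρc, integral_add hρR hρc,
    integral_mul_eq_integral_mul_condExp hX.comap_le (stronglyMeasurable_comp_comap hρ) hρZ hf2]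
  congr 1
  exact integral_congr_ae (by filter_upwards [hR] with ω h; simp [h])

theorem LRwR_threshold_le (hX : Measurable X) (hρ : Measurable ρ)
    (hρ01 : ∀ x, ρ x ∈ Icc (0 : ℝ) 1) (hf2 : Integrable (fun ω => (f (X ω) - Y ω) ^ 2) μ)
    {R : EuclideanSpace ℝ (Fin d) → ℝ} (hR_m : Measurable R)
    (hR : IsCondMean μ X (fun ω => (f (X ω) - Y ω) ^ 2) R) :
    LRwR μ X Y c f (fun x => if R x ≤ c then 1 else 0) ≤ LRwR μ X Y c f ρ := by
  have hthr : Measurable fun x => if R x ≤ c then (1 : ℝ) else 0 :=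
    Measurable.ite (hR_m measurableSet_Iic) measurable_const measurable_const
  have hthr01 : ∀ x, (if R x ≤ c then (1 : ℝ) else 0) ∈ Icc (0 : ℝ) 1 := by
    intro x; split_ifs <;> simp
  rw [LRwR_eq_integral_condRisk hX hthr hthr01 hf2 hR, LRwR_eq_integral_condRisk hX hρ hρ01 hf2 hR]
  obtain ⟨h₁, h₂⟩ := integrable_rejector_mul_and_one_sub_mul (c := c) hX hthr hthr01 hR.integrable
  obtain ⟨h₃, h₄⟩ := integrable_rejector_mul_and_one_sub_mul (c := c) hX hρ hρ01 hR.integrable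
  refine integral_mono (h₁.add h₂) (h₃.add h₄) fun ω => ?_
  obtain ⟨h0, h1⟩ := hρ01 (X ω)
  dsimp only
  split_ifs with h <;> nlinarith

theorem LRwR_condMean_le (hX : Measurable X) (hY : Measurable Y) (hρ : Measurable ρ)
    (hρ01 : ∀ x, ρ x ∈ Icc (0 : ℝ) 1) {fbar : EuclideanSpace ℝ (Fin d) → ℝ}
    (hfbar_m : Measurable fbar) (hfbar : IsCondMean μ X Y fbar)
    (hfbar2 : Integrable (fun ω => (fbar (X ω) - Y ω) ^ 2) μ) (hf : Measurable f)
    (hf2 : Integrable (fun ω => (f (X ω) - Y ω) ^ 2) μ) :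
    LRwR μ X Y c fbar ρ ≤ LRwR μ X Y c f ρ := by
  have hL2 : ∀ {g : EuclideanSpace ℝ (Fin d) → ℝ}, Measurable g →
      Integrable (fun ω => (g (X ω) - Y ω) ^ 2) μ → MemLp ((fun ω => g (X ω)) - Y) 2 μ :=
    fun hg hg2 => (memLp_two_iff_integrable_sq ((hg.comp hX).sub hY).aestronglyMeasurable).2 hg2
  have hpyth := integral_mul_sq_sub_eq_add_of_condExp hX.comap_le
    (stronglyMeasurable_comp_comap hρ)
    (fun ω => (norm_and_norm_one_sub_le_one_of_mem_Icc (hρ01 (X ω))).1)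
    (stronglyMeasurable_comp_comap hfbar_m) (stronglyMeasurable_comp_comap hf)
    (hL2 hfbar_m hfbar2) (hL2 hf hf2) hfbar
  have hgap : 0 ≤ ∫ ω, ρ (X ω) * (f (X ω) - fbar (X ω)) ^ 2 ∂μ :=
    integral_nonneg fun ω => mul_nonneg (hρ01 (X ω)).1 (sq_nonneg _)
  obtain ⟨h₁, h₂⟩ := integrable_rejector_mul_and_one_sub_mul (c := c) hX hρ hρ01 hfbar2
  rw [LRwR, LRwR, integral_add h₁ h₂,
    integral_add (integrable_rejector_mul_and_one_sub_mul (c := c) hX hρ hρ01 hf2).1 h₂]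
  linarith

end LRwR

theorem stmt0_general {Ω : Type*} [MeasurableSpace Ω] {d : ℕ}
    (μ : Measure Ω) [IsProbabilityMeasure μ]
    (X : Ω → EuclideanSpace ℝ (Fin d)) (Y : Ω → ℝ)
    (hX : Measurable X) (hY : Measurable Y)
    (c : ℝ)
    (fstar : EuclideanSpace ℝ (Fin d) → ℝ) (hfstar_m : Measurable fstar)
    (hfstar : IsCondMean μ X Y fstar)
    (hfstar2 : Integrable (fun ω => (fstar (X ω) - Y ω) ^ 2) μ)
    (Rstar : EuclideanSpace ℝ (Fin d) → ℝ) (hRstar_m : Measurable Rstar)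
    (hRstar : IsCondMean μ X (fun ω => (fstar (X ω) - Y ω) ^ 2) Rstar)
    (f : EuclideanSpace ℝ (Fin d) → ℝ) (hf : Measurable f)
    (hf2 : Integrable (fun ω => (f (X ω) - Y ω) ^ 2) μ)
    (r : EuclideanSpace ℝ (Fin d) → ℝ) (hr_m : Measurable r)
    (hr01 : ∀ x, r x = 0 ∨ r x = 1) :
    LRwR μ X Y c fstar (fun x => if Rstar x ≤ c then 1 else 0) ≤ LRwR μ X Y c f r := by
  have hr01' : ∀ x, r x ∈ Icc (0 : ℝ) 1 := fun x => by rcases hr01 x with h | h <;> simp [h]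
  calc LRwR μ X Y c fstar (fun x => if Rstar x ≤ c then 1 else 0)
      ≤ LRwR μ X Y c fstar r := LRwR_threshold_le hX hr_m hr01' hfstar2 hRstar_m hRstar
    _ ≤ LRwR μ X Y c f r := LRwR_condMean_le hX hY hr_m hr01' hfstar_m hfstar hfstar2 hf hf2

/-- the pair `(f*, r*)`, with `f*` the conditional mean and
`r*(x) = 1{R(f*,x) ≤ c}`, minimizes the RwR loss over all measurable
regressor–rejector pairs. -/
theorem stmt0 {Ω : Type*} [MeasurableSpace Ω] {d : ℕ}
    (μ : Measure Ω) [IsProbabilityMeasure μ]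
    (X : Ω → EuclideanSpace ℝ (Fin d)) (Y : Ω → ℝ)
    (hX : Measurable X) (hY : Measurable Y)
    (hY2 : Integrable (fun ω => (Y ω) ^ 2) μ)
    (c : ℝ) (hc : 0 < c)
    (fstar : EuclideanSpace ℝ (Fin d) → ℝ) (hfstar_m : Measurable fstar)
    (hfstar : IsCondMean μ X Y fstar)
    (hfstar2 : Integrable (fun ω => (fstar (X ω) - Y ω) ^ 2) μ)
    (Rstar : EuclideanSpace ℝ (Fin d) → ℝ) (hRstar_m : Measurable Rstar)
    (hRstar : IsCondMean μ X (fun ω => (fstar (X ω) - Y ω) ^ 2) Rstar)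
    (f : EuclideanSpace ℝ (Fin d) → ℝ) (hf : Measurable f)
    (hf2 : Integrable (fun ω => (f (X ω) - Y ω) ^ 2) μ)
    (r : EuclideanSpace ℝ (Fin d) → ℝ) (hr_m : Measurable r)
    (hr01 : ∀ x, r x = 0 ∨ r x = 1) :
    LRwR μ X Y c fstar (fun x => if Rstar x ≤ c then 1 else 0) ≤ LRwR μ X Y c f r :=
  stmt0_general μ X Y hX hY c fstar hfstar_m hfstar hfstar2 Rstar hRstar_m hRstar f hf hf2 r hr_m
    hr01
end
end

section
/- Let f be a measurable regressor with E[(f(X)−Y)²] < ∞, let R̂(f,·) : 𝒳 → ℝ be any measurable calibrator with E[|R̂(f,X) − R(f,X)|] < ∞, and let r_{R̂}(x) = 1{R̂(f,x) ≤ c} be the rejector induced by the calibrator. Then L_RwR(f, r_{R̂}) ≤ L̃(f) + E[ |R̂(f,X) − R(f,X)| ]. -/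
open MeasureTheory Filter

noncomputable section

/-- for the rejector induced by a calibrator `R̂`, the RwR loss
is bounded by the truncated loss plus the calibration error. -/
theorem stmt10 {Ω : Type*} [MeasurableSpace Ω] {d : ℕ}
    (μ : Measure Ω) [IsProbabilityMeasure μ]
    (X : Ω → EuclideanSpace ℝ (Fin d)) (Y : Ω → ℝ)
    (hX : Measurable X) (hY : Measurable Y)
    (hY2 : Integrable (fun ω => (Y ω) ^ 2) μ)
    (c : ℝ) (hc : 0 < c)
    (f : EuclideanSpace ℝ (Fin d) → ℝ) (hf : Measurable f)
    (hf2 : Integrable (fun ω => (f (X ω) - Y ω) ^ 2) μ)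
    (Rf : EuclideanSpace ℝ (Fin d) → ℝ) (hRf_m : Measurable Rf)
    (hRf : IsCondMean μ X (fun ω => (f (X ω) - Y ω) ^ 2) Rf)
    (Rhat : EuclideanSpace ℝ (Fin d) → ℝ) (hRhat_m : Measurable Rhat)
    (hcal : Integrable (fun ω => |Rhat (X ω) - Rf (X ω)|) μ) :
    LRwR μ X Y c f (fun x => if Rhat x ≤ c then 1 else 0)
      ≤ (∫ ω, min (Rf (X ω)) c ∂μ) + ∫ ω, |Rhat (X ω) - Rf (X ω)| ∂μ := by
  classical
  have hm : MeasurableSpace.comap X inferInstance ≤ ‹MeasurableSpace Ω› := hX.comap_le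
  have hs_m : MeasurableSet[MeasurableSpace.comap X inferInstance] {ω | Rhat (X ω) ≤ c} :=
    ⟨{x | Rhat x ≤ c}, hRhat_m measurableSet_Iic, rfl⟩
  have hs : MeasurableSet {ω | Rhat (X ω) ≤ c} := hm _ hs_m
  have hRfX_int : Integrable (fun ω => Rf (X ω)) μ :=
    integrable_condExp.congr hRf.symm
  have hind : ∀ (g : Ω → ℝ),
      (fun ω => (if Rhat (X ω) ≤ c then (1:ℝ) else 0) * g ω) = ({ω | Rhat (X ω) ≤ c} : Set Ω).indicator g := by
    intro g
    funext ω
    by_cases h : Rhat (X ω) ≤ c <;> simp [Set.indicator_apply, h]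
  -- key tower property step
  have key : ∫ ω, (if Rhat (X ω) ≤ c then (1:ℝ) else 0) * (f (X ω) - Y ω) ^ 2 ∂μ
      = ∫ ω, (if Rhat (X ω) ≤ c then (1:ℝ) else 0) * Rf (X ω) ∂μ := by
    rw [hind, hind, integral_indicator hs, integral_indicator hs,
      ← setIntegral_condExp hm hf2 hs_m]
    exact (integral_congr_ae (ae_restrict_of_ae hRf)).symm
  -- integrability facts
  have hint1 : Integrable
      (fun ω => (if Rhat (X ω) ≤ c then (1:ℝ) else 0) * (f (X ω) - Y ω) ^ 2) μ := by
    rw [hind]; exact hf2.indicator hs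
  have hint2 : Integrable
      (fun ω => (1 - (if Rhat (X ω) ≤ c then (1:ℝ) else 0)) * c) μ := by
    have heq : (fun ω => (1 - (if Rhat (X ω) ≤ c then (1:ℝ) else 0)) * c)
        = ({ω | Rhat (X ω) ≤ c} : Set Ω)ᶜ.indicator (fun _ => c) := by
      funext ω
      by_cases h : Rhat (X ω) ≤ c <;> simp [Set.indicator_apply, h]
    rw [heq]
    exact (integrable_const c).indicator hs.compl
  have hint3 : Integrable
      (fun ω => (if Rhat (X ω) ≤ c then (1:ℝ) else 0) * Rf (X ω)) μ := by
    rw [hind]; exact hRfX_int.indicator hs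
  have hmin : Integrable (fun ω => min (Rf (X ω)) c) μ :=
    hRfX_int.inf (integrable_const c)
  -- rewrite LRwR
  have hL : LRwR μ X Y c f (fun x => if Rhat x ≤ c then 1 else 0)
      = ∫ ω, (if Rhat (X ω) ≤ c then (1:ℝ) else 0) * Rf (X ω)
          + (1 - (if Rhat (X ω) ≤ c then (1:ℝ) else 0)) * c ∂μ := by
    rw [LRwR, integral_add hint1 hint2, key, ← integral_add hint3 hint2]
  rw [hL, ← integral_add hmin hcal]
  apply integral_mono (hint3.add hint2) (hmin.add hcal)
  intro ω
  simp only [Pi.add_apply]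
  by_cases h : Rhat (X ω) ≤ c
  · rcases le_total (Rf (X ω)) c with h2 | h2
    · rw [inf_eq_left.mpr h2]
      simp only [h, if_true]
      nlinarith [abs_nonneg (Rhat (X ω) - Rf (X ω))]
    · rw [inf_eq_right.mpr h2]
      simp only [h, if_true]
      nlinarith [neg_abs_le (Rhat (X ω) - Rf (X ω))]
  · rcases le_total (Rf (X ω)) c with h2 | h2
    · rw [inf_eq_left.mpr h2]
      simp only [h, if_false]
      nlinarith [le_abs_self (Rhat (X ω) - Rf (X ω))]
    · rw [inf_eq_right.mpr h2]
      simp only [h, if_false]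
      nlinarith [abs_nonneg (Rhat (X ω) - Rf (X ω))]
end
end

section
/- For every measurable regressor f with E[(f(X)−Y)²] < ∞, the excess truncated loss is bounded by the excess squared loss: L̃(f) − L̃* ≤ L₂(f) − L₂*, where L̃* and L₂* denote the infima of L̃ and L₂ over all measurable functions 𝒳 → ℝ (both attained at the conditional mean f̄). -/
/-!
For a `σ(X)`-measurable predictor `g`, the conditional bias–variance decomposition
`E[(g - Y)² | X] = Var[Y | X] + (g - E[Y | X])²` shows that the conditional risk of any
regressor dominates that of `f̄`, which is `Var[Y | X]`. Truncation at `c` is monotone and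
1-Lipschitz, so `min (R f) c - min (R f̄) c ≤ R f - R f̄` pointwise; integrating and using the
tower property `E[R f] = L₂ f` gives the claim.
-/

open MeasureTheory Filter

noncomputable section

open ProbabilityTheory

namespace ProbabilityTheory

variable {Ω : Type*} {m m₀ : MeasurableSpace Ω} {μ : Measure[m₀] Ω} {X g : Ω → ℝ}

lemma condVar_sub_of_stronglyMeasurable_left (hm : m ≤ m₀) [SigmaFinite (μ.trim hm)]
    (hg : StronglyMeasurable[m] g) (hg_int : Integrable g μ) (hX : Integrable X μ) :
    Var[g - X; μ | m] =ᵐ[μ] Var[X; μ | m] := by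
  refine condExp_congr_ae ?_
  filter_upwards [condExp_sub (m := m) hg_int hX] with ω hω
  rw [Pi.pow_apply, Pi.sub_apply, hω, Pi.sub_apply, condExp_of_stronglyMeasurable hm hg hg_int]
  simp only [Pi.pow_apply, Pi.sub_apply]
  ring

lemma condExp_sq_sub_ae_eq_condVar_add (hm : m ≤ m₀) [IsFiniteMeasure μ]
    (hg : StronglyMeasurable[m] g) (hg_L2 : MemLp g 2 μ) (hX : MemLp X 2 μ) :
    μ[(g - X) ^ 2 | m] =ᵐ[μ] Var[X; μ | m] + (g - μ[X | m]) ^ 2 := by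
  have hg_int := hg_L2.integrable one_le_two
  have hX_int := hX.integrable one_le_two
  filter_upwards [condVar_ae_eq_condExp_sq_sub_sq_condExp hm (hg_L2.sub hX),
    condVar_sub_of_stronglyMeasurable_left hm hg hg_int hX_int,
    condExp_sub (m := m) hg_int hX_int] with ω hvar hsub hexp
  simp only [Pi.add_apply, Pi.sub_apply, Pi.pow_apply] at *
  rw [← hsub, hvar, hexp, condExp_of_stronglyMeasurable hm hg hg_int]
  ring

lemma condVar_ae_le_condExp_sq_sub (hm : m ≤ m₀) [IsFiniteMeasure μ]
    (hg : StronglyMeasurable[m] g) (hg_L2 : MemLp g 2 μ) (hX : MemLp X 2 μ) :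
    Var[X; μ | m] ≤ᵐ[μ] μ[(g - X) ^ 2 | m] := by
  filter_upwards [condExp_sq_sub_ae_eq_condVar_add hm hg hg_L2 hX] with ω hω
  rw [hω, Pi.add_apply]
  exact le_add_of_nonneg_right (sq_nonneg _)

end ProbabilityTheory

namespace MeasureTheory

variable {α : Type*} [MeasurableSpace α] {μ : Measure α} [IsFiniteMeasure μ] {u v : α → ℝ}

lemma integral_min_sub_integral_min_le (hu : Integrable u μ) (hv : Integrable v μ)
    (huv : u ≤ᵐ[μ] v) (c : ℝ) :
    ∫ a, min (v a) c ∂μ - ∫ a, min (u a) c ∂μ ≤ ∫ a, v a ∂μ - ∫ a, u a ∂μ := by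
  have hmin {w : α → ℝ} (hw : Integrable w μ) : Integrable (fun a => min (w a) c) μ :=
    hw.inf (integrable_const c)
  rw [← integral_sub (hmin hv) (hmin hu), ← integral_sub hv hu]
  refine integral_mono_ae ((hmin hv).sub (hmin hu)) (hv.sub hu) ?_
  filter_upwards [huv] with a ha
  grind

end MeasureTheory

theorem stmt12_general {Ω : Type*} [MeasurableSpace Ω] {d : ℕ}
    (μ : Measure Ω) [IsProbabilityMeasure μ]
    (X : Ω → EuclideanSpace ℝ (Fin d)) (Y : Ω → ℝ)
    (hX : Measurable X) (hY : Measurable Y)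
    (hY2 : Integrable (fun ω => (Y ω) ^ 2) μ)
    (c : ℝ)
    (fbar : EuclideanSpace ℝ (Fin d) → ℝ)
    (hfbar : IsCondMean μ X Y fbar)
    (Rbar : EuclideanSpace ℝ (Fin d) → ℝ)
    (hRbar : IsCondMean μ X (fun ω => (fbar (X ω) - Y ω) ^ 2) Rbar)
    (f : EuclideanSpace ℝ (Fin d) → ℝ) (hf : Measurable f)
    (hf2 : Integrable (fun ω => (f (X ω) - Y ω) ^ 2) μ)
    (Rf : EuclideanSpace ℝ (Fin d) → ℝ)
    (hRf : IsCondMean μ X (fun ω => (f (X ω) - Y ω) ^ 2) Rf) :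
    (∫ ω, min (Rf (X ω)) c ∂μ) - ∫ ω, min (Rbar (X ω)) c ∂μ
      ≤ (∫ ω, (f (X ω) - Y ω) ^ 2 ∂μ) - ∫ ω, (fbar (X ω) - Y ω) ^ 2 ∂μ := by
  have hm : MeasurableSpace.comap X inferInstance ≤ ‹MeasurableSpace Ω› := hX.comap_le
  have hY_L2 : MemLp Y 2 μ := (memLp_two_iff_integrable_sq hY.aestronglyMeasurable).2 hY2
  have hg : StronglyMeasurable[MeasurableSpace.comap X inferInstance] (fun ω => f (X ω)) :=
    (hf.comp (comap_measurable X)).stronglyMeasurable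
  have hg_L2 : MemLp (fun ω => f (X ω)) 2 μ := by
    have hgY : MemLp (fun ω => f (X ω) - Y ω) 2 μ :=
      (memLp_two_iff_integrable_sq ((hf.comp hX).sub hY).aestronglyMeasurable).2 hf2
    convert hgY.add hY_L2 using 1
    ext ω
    simp
  have hRbar_eq :
      (fun ω => Rbar (X ω)) =ᵐ[μ] Var[Y; μ | MeasurableSpace.comap X inferInstance] :=
    EventuallyEq.trans hRbar <| condExp_congr_ae <| by
      filter_upwards [hfbar] with ω hω
      simp only [Pi.pow_apply, Pi.sub_apply, ← hω]
      ring
  have hRbar_le : (fun ω => Rbar (X ω)) ≤ᵐ[μ] fun ω => Rf (X ω) := by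
    filter_upwards [hRbar_eq, condVar_ae_le_condExp_sq_sub hm hg hg_L2 hY_L2, hRf] with ω h₁ h₂ h₃
    simp only [h₁, h₃]
    exact h₂
  have hR_int (R Z) (hR : IsCondMean μ X Z R) : Integrable (fun ω => R (X ω)) μ :=
    integrable_condExp.congr (EventuallyEq.symm hR)
  have hR_integral (R Z) (hR : IsCondMean μ X Z R) : ∫ ω, R (X ω) ∂μ = ∫ ω, Z ω ∂μ := by
    rw [integral_congr_ae hR, integral_condExp hm]
  calc _ ≤ ∫ ω, Rf (X ω) ∂μ - ∫ ω, Rbar (X ω) ∂μ :=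
        integral_min_sub_integral_min_le (hR_int _ _ hRbar) (hR_int _ _ hRf) hRbar_le c
    _ = _ := by rw [hR_integral _ _ hRf, hR_integral _ _ hRbar]

/-- the excess truncated loss is bounded by the excess squared
loss, where both infima over all measurable regressors are attained at the
conditional mean `f̄` (so `L̃* = L̃(f̄)` and `L₂* = L₂(f̄)`). -/
theorem stmt12 {Ω : Type*} [MeasurableSpace Ω] {d : ℕ}
    (μ : Measure Ω) [IsProbabilityMeasure μ]
    (X : Ω → EuclideanSpace ℝ (Fin d)) (Y : Ω → ℝ)
    (hX : Measurable X) (hY : Measurable Y)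
    (hY2 : Integrable (fun ω => (Y ω) ^ 2) μ)
    (c : ℝ) (hc : 0 < c)
    (fbar : EuclideanSpace ℝ (Fin d) → ℝ) (hfbar_m : Measurable fbar)
    (hfbar : IsCondMean μ X Y fbar)
    (hfbar2 : Integrable (fun ω => (fbar (X ω) - Y ω) ^ 2) μ)
    (Rbar : EuclideanSpace ℝ (Fin d) → ℝ) (hRbar_m : Measurable Rbar)
    (hRbar : IsCondMean μ X (fun ω => (fbar (X ω) - Y ω) ^ 2) Rbar)
    (f : EuclideanSpace ℝ (Fin d) → ℝ) (hf : Measurable f)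
    (hf2 : Integrable (fun ω => (f (X ω) - Y ω) ^ 2) μ)
    (Rf : EuclideanSpace ℝ (Fin d) → ℝ) (hRf_m : Measurable Rf)
    (hRf : IsCondMean μ X (fun ω => (f (X ω) - Y ω) ^ 2) Rf) :
    (∫ ω, min (Rf (X ω)) c ∂μ) - ∫ ω, min (Rbar (X ω)) c ∂μ
      ≤ (∫ ω, (f (X ω) - Y ω) ^ 2 ∂μ) - ∫ ω, (fbar (X ω) - Y ω) ^ 2 ∂μ :=
  stmt12_general μ X Y hX hY hY2 c fbar hfbar Rbar hRbar f hf hf2 Rf hRf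
end
end

section
/- Let f be a measurable regressor with E[(f(X)−Y)²] < ∞, r_f its induced rejector, and f* = f̄, r*(x) = 1{R(f*,x) ≤ c}. Then the excess RwR risk of the pair (f, r_f) is bounded by the squared prediction error: 0 ≤ L_RwR(f, r_f) − L_RwR(f*, r*) ≤ E[(f(X) − f*(X))²]. -/
/-! Given `X`, the pair `(f, r_f)` pays `min (R(f,X), c)`, so both losses are integrals of
`min (R, c)`. Since `f*` is the conditional mean, the cross term in the expansion of
`(f − Y)² = (f* − Y + f − f*)²` has vanishing conditional mean, whence
`R(f,X) = R(f*,X) + (f(X) − f*(X))²` a.s.; as `t ↦ min (t, c)` is monotone and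
1-Lipschitz, the integrands differ by an amount between `0` and `(f(X) − f*(X))²`. -/

open MeasureTheory Filter

noncomputable section

section CondExp

variable {Ω : Type*} {m m₀ : MeasurableSpace Ω} {μ : Measure Ω}

lemma condExp_sq_sub_ae_eq_add [IsFiniteMeasure μ] (hm : m ≤ m₀) {Y a b : Ω → ℝ}
    (ha : StronglyMeasurable[m] a) (hb : StronglyMeasurable[m] b) (hb_mean : b =ᵐ[μ] μ[Y | m])
    (ha_L2 : MemLp (fun ω => a ω - Y ω) 2 μ) (hb_L2 : MemLp (fun ω => b ω - Y ω) 2 μ) :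
    μ[fun ω => (a ω - Y ω) ^ 2 | m]
      =ᵐ[μ] fun ω => μ[fun ω => (b ω - Y ω) ^ 2 | m] ω + (a ω - b ω) ^ 2 := by
  have hb_int : Integrable b μ := integrable_condExp.congr hb_mean.symm
  have hbY_int : Integrable (b - Y) μ := hb_L2.integrable one_le_two
  have hY_int : Integrable Y μ :=
    (hb_int.sub hbY_int).congr (ae_of_all _ fun ω => sub_sub_cancel (b ω) (Y ω))
  have hab : MemLp (fun ω => 2 * (a ω - b ω)) 2 μ := by
    simpa using (ha_L2.sub hb_L2).const_mul 2
  have hab_sm : StronglyMeasurable[m] fun ω => 2 * (a ω - b ω) :=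
    (ha.sub hb).const_mul 2
  have hcross_int : Integrable ((fun ω => 2 * (a ω - b ω)) * (b - Y)) μ :=
    hab.integrable_mul hb_L2
  have hcross : μ[(fun ω => 2 * (a ω - b ω)) * (b - Y) | m] =ᵐ[μ] 0 := by
    have hcenter : μ[b - Y | m] =ᵐ[μ] 0 := by
      filter_upwards [condExp_sub hb_int hY_int m, hb_mean] with ω h hω
      rw [h, condExp_of_stronglyMeasurable hm hb hb_int, Pi.sub_apply, hω, sub_self, Pi.zero_apply]
    filter_upwards [condExp_mul_of_stronglyMeasurable_left hab_sm hcross_int hbY_int, hcenter]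
      with ω h h0
    rw [h, Pi.mul_apply, h0, Pi.zero_apply, mul_zero]
  have hsplit : (fun ω => (a ω - Y ω) ^ 2) = (fun ω => (b ω - Y ω) ^ 2)
      + (fun ω => 2 * (a ω - b ω)) * (b - Y) + fun ω => (a ω - b ω) ^ 2 := by
    funext ω; simp only [Pi.add_apply, Pi.mul_apply, Pi.sub_apply]; ring
  have hsq_sm : StronglyMeasurable[m] fun ω => (a ω - b ω) ^ 2 := (ha.sub hb).pow 2
  have hsq_int : Integrable (fun ω => (a ω - b ω) ^ 2) μ := by
    simpa using ((ha_L2.sub hb_L2).integrable_sq)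
  rw [hsplit]
  filter_upwards [condExp_add (hb_L2.integrable_sq.add hcross_int) hsq_int m,
    condExp_add hb_L2.integrable_sq hcross_int m, hcross] with ω h₁ h₂ h₀
  rw [h₁, Pi.add_apply, h₂, Pi.add_apply, h₀, condExp_of_stronglyMeasurable hm hsq_sm hsq_int]
  simp only [Pi.zero_apply, add_zero]

end CondExp

lemma min_add_sub_min_mem_Icc {s d : ℝ} (c : ℝ) (hd : 0 ≤ d) :
    0 ≤ min (s + d) c - min s c ∧ min (s + d) c - min s c ≤ d := by
  have h₁ : min s c ≤ min (s + d) c := min_le_min_right c (le_add_of_nonneg_right hd)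
  have h₂ : min (s + d) c ≤ min s c + d := by
    rw [← min_add_add_right]
    exact min_le_min_left _ (le_add_of_nonneg_right hd)
  constructor <;> linarith

lemma integral_min_sub_integral_min_mem_Icc {Ω : Type*} [MeasurableSpace Ω] {μ : Measure Ω}
    [IsFiniteMeasure μ] {R S D : Ω → ℝ} (c : ℝ) (hR : Integrable R μ) (hS : Integrable S μ)
    (hRSD : ∀ᵐ ω ∂μ, R ω = S ω + D ω) (hD : ∀ᵐ ω ∂μ, 0 ≤ D ω) :
    0 ≤ ∫ ω, min (R ω) c ∂μ - ∫ ω, min (S ω) c ∂μ ∧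
      ∫ ω, min (R ω) c ∂μ - ∫ ω, min (S ω) c ∂μ ≤ ∫ ω, D ω ∂μ := by
  have hminR : Integrable (fun ω => min (R ω) c) μ := hR.inf (integrable_const c)
  have hminS : Integrable (fun ω => min (S ω) c) μ := hS.inf (integrable_const c)
  have hD_int : Integrable D μ :=
    (hR.sub hS).congr (by filter_upwards [hRSD] with ω h; simp [h])
  have hbound : ∀ᵐ ω ∂μ, 0 ≤ min (R ω) c - min (S ω) c ∧ min (R ω) c - min (S ω) c ≤ D ω := by
    filter_upwards [hRSD, hD] with ω h h0
    rw [h]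
    exact min_add_sub_min_mem_Icc c h0
  rw [← integral_sub hminR hminS]
  exact ⟨integral_nonneg_of_ae (hbound.mono fun _ h => h.1),
    integral_mono_ae (hminR.sub hminS) hD_int (hbound.mono fun _ h => h.2)⟩

section RwR

variable {Ω : Type*} [MeasurableSpace Ω] {d : ℕ} {μ : Measure Ω}
  {X : Ω → EuclideanSpace ℝ (Fin d)}

lemma IsCondMean.integrable_comp {Z : Ω → ℝ} {g : EuclideanSpace ℝ (Fin d) → ℝ}
    (hg : IsCondMean μ X Z g) : Integrable (fun ω => g (X ω)) μ :=
  integrable_condExp.congr hg.symm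

lemma LRwR_eq_integral_min [IsFiniteMeasure μ] (hX : Measurable X) {Y : Ω → ℝ} (c : ℝ)
    {g R : EuclideanSpace ℝ (Fin d) → ℝ} (hg : Integrable (fun ω => (g (X ω) - Y ω) ^ 2) μ)
    (hR_m : Measurable R) (hR : IsCondMean μ X (fun ω => (g (X ω) - Y ω) ^ 2) R) :
    LRwR μ X Y c g (fun x => if R x ≤ c then 1 else 0) = ∫ ω, min (R (X ω)) c ∂μ := by
  classical
  set A : Set Ω := X ⁻¹' {x | R x ≤ c}
  have hA : MeasurableSet[MeasurableSpace.comap X inferInstance] A :=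
    ⟨_, measurableSet_le hR_m measurable_const, rfl⟩
  have hA₀ : MeasurableSet A := hX.comap_le _ hA
  have hloss : (fun ω => (if R (X ω) ≤ c then 1 else 0) * (g (X ω) - Y ω) ^ 2
      + (1 - if R (X ω) ≤ c then 1 else 0) * c)
      = A.piecewise (fun ω => (g (X ω) - Y ω) ^ 2) fun _ => c := by
    funext ω
    by_cases h : R (X ω) ≤ c <;> simp [A, Set.piecewise, h]
  have hmin : (fun ω => min (R (X ω)) c) = A.piecewise (fun ω => R (X ω)) fun _ => c := by
    funext ω
    by_cases h : R (X ω) ≤ c <;> simp [A, Set.piecewise, h, le_of_not_ge]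
  have hA_eq : ∫ ω in A, (g (X ω) - Y ω) ^ 2 ∂μ = ∫ ω in A, R (X ω) ∂μ := by
    rw [← setIntegral_condExp hX.comap_le hg hA]
    exact setIntegral_congr_ae hA₀ (hR.mono fun _ h _ => h.symm)
  rw [LRwR, hloss, hmin, integral_piecewise hA₀ hg.integrableOn (integrable_const c).integrableOn,
    integral_piecewise hA₀ hR.integrable_comp.integrableOn (integrable_const c).integrableOn, hA_eq]

end RwR

theorem stmt15_general {Ω : Type*} [MeasurableSpace Ω] {d : ℕ}
    (μ : Measure Ω) [IsProbabilityMeasure μ]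
    (X : Ω → EuclideanSpace ℝ (Fin d)) (Y : Ω → ℝ)
    (hX : Measurable X) (hY : Measurable Y)
    (c : ℝ)
    (fstar : EuclideanSpace ℝ (Fin d) → ℝ) (hfstar_m : Measurable fstar)
    (hfstar : IsCondMean μ X Y fstar)
    (hfstar2 : Integrable (fun ω => (fstar (X ω) - Y ω) ^ 2) μ)
    (Rstar : EuclideanSpace ℝ (Fin d) → ℝ) (hRstar_m : Measurable Rstar)
    (hRstar : IsCondMean μ X (fun ω => (fstar (X ω) - Y ω) ^ 2) Rstar)
    (f : EuclideanSpace ℝ (Fin d) → ℝ) (hf : Measurable f)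
    (hf2 : Integrable (fun ω => (f (X ω) - Y ω) ^ 2) μ)
    (Rf : EuclideanSpace ℝ (Fin d) → ℝ) (hRf_m : Measurable Rf)
    (hRf : IsCondMean μ X (fun ω => (f (X ω) - Y ω) ^ 2) Rf) :
    0 ≤ LRwR μ X Y c f (fun x => if Rf x ≤ c then 1 else 0)
        - LRwR μ X Y c fstar (fun x => if Rstar x ≤ c then 1 else 0) ∧
    LRwR μ X Y c f (fun x => if Rf x ≤ c then 1 else 0)
        - LRwR μ X Y c fstar (fun x => if Rstar x ≤ c then 1 else 0)
      ≤ ∫ ω, (f (X ω) - fstar (X ω)) ^ 2 ∂μ := by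
  have hm : MeasurableSpace.comap X inferInstance ≤ ‹MeasurableSpace Ω› := hX.comap_le
  have hXm : Measurable[MeasurableSpace.comap X inferInstance] X := comap_measurable X
  have hLp : ∀ g : EuclideanSpace ℝ (Fin d) → ℝ, Measurable g →
      Integrable (fun ω => (g (X ω) - Y ω) ^ 2) μ → MemLp (fun ω => g (X ω) - Y ω) 2 μ :=
    fun g hg h => (memLp_two_iff_integrable_sq ((hg.comp hX).sub hY).aestronglyMeasurable).2 h
  have hRf_eq : ∀ᵐ ω ∂μ, Rf (X ω) = Rstar (X ω) + (f (X ω) - fstar (X ω)) ^ 2 := by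
    filter_upwards [hRf, hRstar,
      condExp_sq_sub_ae_eq_add hm (a := fun ω => f (X ω)) (b := fun ω => fstar (X ω))
        (hf.comp hXm).stronglyMeasurable (hfstar_m.comp hXm).stronglyMeasurable hfstar
        (hLp f hf hf2) (hLp fstar hfstar_m hfstar2)] with ω h₁ h₂ h₃
    rw [h₁, h₃, h₂]
  rw [LRwR_eq_integral_min hX c hf2 hRf_m hRf, LRwR_eq_integral_min hX c hfstar2 hRstar_m hRstar]
  exact integral_min_sub_integral_min_mem_Icc c hRf.integrable_comp hRstar.integrable_comp hRf_eq
    (ae_of_all _ fun _ => sq_nonneg _)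

/-- the excess RwR risk of the pair `(f, r_f)` over the optimal
pair `(f*, r*)` is nonnegative and bounded by the squared prediction error. -/
theorem stmt15 {Ω : Type*} [MeasurableSpace Ω] {d : ℕ}
    (μ : Measure Ω) [IsProbabilityMeasure μ]
    (X : Ω → EuclideanSpace ℝ (Fin d)) (Y : Ω → ℝ)
    (hX : Measurable X) (hY : Measurable Y)
    (hY2 : Integrable (fun ω => (Y ω) ^ 2) μ)
    (c : ℝ) (hc : 0 < c)
    (fstar : EuclideanSpace ℝ (Fin d) → ℝ) (hfstar_m : Measurable fstar)
    (hfstar : IsCondMean μ X Y fstar)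
    (hfstar2 : Integrable (fun ω => (fstar (X ω) - Y ω) ^ 2) μ)
    (Rstar : EuclideanSpace ℝ (Fin d) → ℝ) (hRstar_m : Measurable Rstar)
    (hRstar : IsCondMean μ X (fun ω => (fstar (X ω) - Y ω) ^ 2) Rstar)
    (f : EuclideanSpace ℝ (Fin d) → ℝ) (hf : Measurable f)
    (hf2 : Integrable (fun ω => (f (X ω) - Y ω) ^ 2) μ)
    (hdiff2 : Integrable (fun ω => (f (X ω) - fstar (X ω)) ^ 2) μ)
    (Rf : EuclideanSpace ℝ (Fin d) → ℝ) (hRf_m : Measurable Rf)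
    (hRf : IsCondMean μ X (fun ω => (f (X ω) - Y ω) ^ 2) Rf) :
    0 ≤ LRwR μ X Y c f (fun x => if Rf x ≤ c then 1 else 0)
        - LRwR μ X Y c fstar (fun x => if Rstar x ≤ c then 1 else 0) ∧
    LRwR μ X Y c f (fun x => if Rf x ≤ c then 1 else 0)
        - LRwR μ X Y c fstar (fun x => if Rstar x ≤ c then 1 else 0)
      ≤ ∫ ω, (f (X ω) - fstar (X ω)) ^ 2 ∂μ :=
  stmt15_general μ X Y hX hY c fstar hfstar_m hfstar hfstar2 Rstar hRstar_m hRstar f hf hf2 Rf hRf_m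
    hRf
end
end

section
/- Suppose there is a constant B such that |f(X) − Y|² ≤ B almost surely for every regressor f under consideration. Let (f_n)_{n≥1} be measurable regressors and (r_n)_{n≥1} measurable rejectors such that E[(f_n(X) − f*(X))²] → 0 and E[(r_n(X) − r_{f_n}(X))²] → 0 as n → ∞, where f* = f̄ and r_{f_n} is the rejector induced by f_n. Then L_RwR(f_n, r_n) → L_RwR(f*, r*) as n → ∞, where r*(x) = 1{R(f*,x) ≤ c}. -/
/-! The rejector induced by a regressor `g` turns the loss into `E[min(R(g,X), c)]`: on the
`σ(X)`-measurable set `{R(g,X) ≤ c}` the squared error may be replaced by its conditional mean.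
Since the rejectors are `{0,1}`-valued, `L(f_n, r_n)` differs from `L(f_n, r_{f_n})` by at most
`(B + |c|) E[(r_n − r_{f_n})²]`. Finally `min(·, c)` is 1-Lipschitz and conditional expectation
contracts `L¹`, so
`|E min(R(f_n,X), c) − E min(R(f*,X), c)| ≤ E|(f_n−Y)² − (f*−Y)²| ≤ 2√B E|f_n − f*|`,
which tends to `0` because `E|f_n − f*| ≤ (E(f_n − f*)²)^{1/2}`. -/

open MeasureTheory Filter

noncomputable section

theorem abs_sub_eq_sq_of_mem_zero_one {a b : ℝ} (ha : a = 0 ∨ a = 1) (hb : b = 0 ∨ b = 1) :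
    |a - b| = (a - b) ^ 2 := by
  rcases ha with rfl | rfl <;> rcases hb with rfl | rfl <;> norm_num

theorem abs_sq_sub_sq_le_of_sq_le {a b B : ℝ} (ha : a ^ 2 ≤ B) (hb : b ^ 2 ≤ B) :
    |a ^ 2 - b ^ 2| ≤ 2 * √B * |a - b| := by
  have hsum : |a + b| ≤ 2 * √B := by
    linarith [abs_add_le a b, Real.abs_le_sqrt ha, Real.abs_le_sqrt hb]
  calc |a ^ 2 - b ^ 2| = |a + b| * |a - b| := by rw [← abs_mul]; ring_nf
    _ ≤ 2 * √B * |a - b| := by gcongr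

section

variable {Ω : Type*} [MeasurableSpace Ω] {μ : Measure Ω}

theorem integral_abs_le_sqrt_integral_sq [IsProbabilityMeasure μ] {h : Ω → ℝ}
    (hh : MemLp h 2 μ) : ∫ ω, |h ω| ∂μ ≤ √(∫ ω, h ω ^ 2 ∂μ) := by
  have habs : MemLp (fun ω => |h ω|) 2 μ := by simpa only [Real.norm_eq_abs] using hh.norm
  have hvar := ProbabilityTheory.variance_nonneg (fun ω => |h ω|) μ
  simp only [ProbabilityTheory.variance_eq_sub habs, Pi.pow_apply, sq_abs, sub_nonneg] at hvar
  exact Real.le_sqrt_of_sq_le hvar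

theorem integrable_sq_of_ae_sq_le [IsFiniteMeasure μ] {h : Ω → ℝ} {B : ℝ}
    (hh : AEStronglyMeasurable h μ) (hB : ∀ᵐ ω ∂μ, h ω ^ 2 ≤ B) :
    Integrable (fun ω => h ω ^ 2) μ :=
  Integrable.of_bound (hh.pow 2) B <| by
    filter_upwards [hB] with ω hω
    rwa [Real.norm_eq_abs, abs_of_nonneg (sq_nonneg _)]

variable {d : ℕ} {X : Ω → EuclideanSpace ℝ (Fin d)} {Y : Ω → ℝ} {c B : ℝ}

theorem integral_abs_sub_le_of_isCondMean {Z₁ Z₂ : Ω → ℝ}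
    {R₁ R₂ : EuclideanSpace ℝ (Fin d) → ℝ} (hZ₁ : Integrable Z₁ μ) (hZ₂ : Integrable Z₂ μ)
    (hR₁ : IsCondMean μ X Z₁ R₁) (hR₂ : IsCondMean μ X Z₂ R₂) :
    ∫ ω, |R₁ (X ω) - R₂ (X ω)| ∂μ ≤ ∫ ω, |Z₁ ω - Z₂ ω| ∂μ := by
  have hsub : (fun ω => R₁ (X ω) - R₂ (X ω)) =ᵐ[μ]
      μ[fun ω => Z₁ ω - Z₂ ω | MeasurableSpace.comap X inferInstance] :=
    (hR₁.sub hR₂).trans (condExp_sub hZ₁ hZ₂ _).symm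
  exact (integral_congr_ae (hsub.fun_comp abs)).trans_le (integral_abs_condExp_le _)

theorem LRwR_induced_eq_integral_min [IsFiniteMeasure μ] {g R : EuclideanSpace ℝ (Fin d) → ℝ}
    (hX : Measurable X) (hR : Measurable R)
    (hZ : Integrable (fun ω => (g (X ω) - Y ω) ^ 2) μ)
    (hRZ : IsCondMean μ X (fun ω => (g (X ω) - Y ω) ^ 2) R) :
    LRwR μ X Y c g (fun x => if R x ≤ c then 1 else 0) = ∫ ω, min (R (X ω)) c ∂μ := by
  classical
  set S := X ⁻¹' {x | R x ≤ c}
  have hm := hX.comap_le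
  have hSX : MeasurableSet[MeasurableSpace.comap X inferInstance] S :=
    ⟨_, measurableSet_le hR measurable_const, rfl⟩
  have hS : MeasurableSet S := hm _ hSX
  have hRX : Integrable (fun ω => R (X ω)) μ := integrable_condExp.congr hRZ.symm
  calc LRwR μ X Y c g (fun x => if R x ≤ c then 1 else 0)
      = ∫ ω, S.piecewise (fun ω => (g (X ω) - Y ω) ^ 2) (fun _ => c) ω ∂μ := by
        refine integral_congr_ae (ae_of_all _ fun ω => ?_)
        by_cases h : R (X ω) ≤ c <;> simp [S, Set.piecewise, h]
    _ = ∫ ω in S, (g (X ω) - Y ω) ^ 2 ∂μ + ∫ ω in Sᶜ, c ∂μ :=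
        integral_piecewise hS hZ.integrableOn (integrable_const c).integrableOn
    _ = ∫ ω in S, R (X ω) ∂μ + ∫ ω in Sᶜ, c ∂μ := by
        rw [← setIntegral_condExp hm hZ hSX, setIntegral_congr_ae hS (hRZ.mono fun _ h _ => h)]
    _ = ∫ ω, S.piecewise (fun ω => R (X ω)) (fun _ => c) ω ∂μ :=
        (integral_piecewise hS hRX.integrableOn (integrable_const c).integrableOn).symm
    _ = ∫ ω, min (R (X ω)) c ∂μ := by
        refine integral_congr_ae (ae_of_all _ fun ω => ?_)
        by_cases h : R (X ω) ≤ c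
        · simp [S, Set.piecewise, h]
        · simp [S, Set.piecewise, h, (not_le.mp h).le]

theorem abs_LRwR_sub_LRwR_le [IsFiniteMeasure μ] {f r r' : EuclideanSpace ℝ (Fin d) → ℝ}
    (hX : Measurable X) (hr : Measurable r) (hr' : Measurable r')
    (hr01 : ∀ x, r x = 0 ∨ r x = 1) (hr'01 : ∀ x, r' x = 0 ∨ r' x = 1)
    (hZ : Integrable (fun ω => (f (X ω) - Y ω) ^ 2) μ)
    (hB : ∀ᵐ ω ∂μ, (f (X ω) - Y ω) ^ 2 ≤ B) :
    |LRwR μ X Y c f r - LRwR μ X Y c f r'| ≤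
      (B + |c|) * ∫ ω, (r (X ω) - r' (X ω)) ^ 2 ∂μ := by
  have hint : ∀ s : EuclideanSpace ℝ (Fin d) → ℝ, Measurable s → (∀ x, s x = 0 ∨ s x = 1) →
      Integrable (fun ω => s (X ω) * (f (X ω) - Y ω) ^ 2 + (1 - s (X ω)) * c) μ := by
    intro s hs hs01
    have hbdd : ∀ᵐ ω ∂μ, ‖s (X ω)‖ ≤ 1 :=
      ae_of_all _ fun ω => by rcases hs01 (X ω) with h | h <;> simp [h]
    have hsX : Integrable (fun ω => s (X ω)) μ :=
      Integrable.of_bound (hs.comp hX).aestronglyMeasurable 1 hbdd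
    exact (hZ.bdd_mul (hs.comp hX).aestronglyMeasurable hbdd).add
      (((integrable_const 1).sub hsX).mul_const c)
  have hsq : Integrable (fun ω => (r (X ω) - r' (X ω)) ^ 2) μ :=
    integrable_sq_of_ae_sq_le (by fun_prop) (B := 1) <| ae_of_all _ fun ω => by
      rcases hr01 (X ω) with h | h <;> rcases hr'01 (X ω) with h' | h' <;> simp [h, h']
  rw [LRwR, LRwR, ← integral_sub (hint r hr hr01) (hint r' hr' hr'01),
    ← integral_const_mul (B + |c|)]
  refine norm_integral_le_of_norm_le (G := ℝ) (hsq.const_mul _) ?_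
  filter_upwards [hB] with ω hω
  have hZc : |(f (X ω) - Y ω) ^ 2 - c| ≤ B + |c| := by
    refine (abs_sub _ _).trans ?_
    rw [abs_of_nonneg (sq_nonneg _)]
    linarith
  calc ‖r (X ω) * (f (X ω) - Y ω) ^ 2 + (1 - r (X ω)) * c -
        (r' (X ω) * (f (X ω) - Y ω) ^ 2 + (1 - r' (X ω)) * c)‖
      = |r (X ω) - r' (X ω)| * |(f (X ω) - Y ω) ^ 2 - c| := by
        rw [Real.norm_eq_abs, ← abs_mul]; ring_nf
    _ ≤ (B + |c|) * (r (X ω) - r' (X ω)) ^ 2 := by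
        rw [abs_sub_eq_sq_of_mem_zero_one (hr01 _) (hr'01 _), mul_comm]
        gcongr

theorem abs_integral_min_sub_integral_min_le [IsProbabilityMeasure μ]
    {g₁ g₂ R₁ R₂ : EuclideanSpace ℝ (Fin d) → ℝ}
    (hX : Measurable X) (hY : Measurable Y) (hg₁ : Measurable g₁) (hg₂ : Measurable g₂)
    (hB₁ : ∀ᵐ ω ∂μ, (g₁ (X ω) - Y ω) ^ 2 ≤ B) (hB₂ : ∀ᵐ ω ∂μ, (g₂ (X ω) - Y ω) ^ 2 ≤ B)
    (hR₁ : IsCondMean μ X (fun ω => (g₁ (X ω) - Y ω) ^ 2) R₁)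
    (hR₂ : IsCondMean μ X (fun ω => (g₂ (X ω) - Y ω) ^ 2) R₂) :
    |∫ ω, min (R₁ (X ω)) c ∂μ - ∫ ω, min (R₂ (X ω)) c ∂μ| ≤
      2 * √B * √(∫ ω, (g₁ (X ω) - g₂ (X ω)) ^ 2 ∂μ) := by
  have hZ₁ := integrable_sq_of_ae_sq_le (by fun_prop) hB₁
  have hZ₂ := integrable_sq_of_ae_sq_le (by fun_prop) hB₂
  have hR₁X : Integrable (fun ω => R₁ (X ω)) μ := integrable_condExp.congr hR₁.symm
  have hR₂X : Integrable (fun ω => R₂ (X ω)) μ := integrable_condExp.congr hR₂.symm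
  have hmin₁ : Integrable (fun ω => min (R₁ (X ω)) c) μ := hR₁X.inf (integrable_const c)
  have hmin₂ : Integrable (fun ω => min (R₂ (X ω)) c) μ := hR₂X.inf (integrable_const c)
  have hL2 : MemLp (fun ω => g₁ (X ω) - g₂ (X ω)) 2 μ := by
    have h₁ := (memLp_two_iff_integrable_sq (by fun_prop)).2 hZ₁
    have h₂ := (memLp_two_iff_integrable_sq (by fun_prop)).2 hZ₂
    convert h₁.sub h₂ using 1
    ext ω
    simp only [Pi.sub_apply, sub_sub_sub_cancel_right]
  calc |∫ ω, min (R₁ (X ω)) c ∂μ - ∫ ω, min (R₂ (X ω)) c ∂μ|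
      = |∫ ω, (min (R₁ (X ω)) c - min (R₂ (X ω)) c) ∂μ| := by
        rw [integral_sub hmin₁ hmin₂]
    _ ≤ ∫ ω, |R₁ (X ω) - R₂ (X ω)| ∂μ := by
        refine norm_integral_le_of_norm_le (G := ℝ) (hR₁X.sub hR₂X).abs (ae_of_all _ fun ω => ?_)
        simpa using abs_min_sub_min_le_max (R₁ (X ω)) c (R₂ (X ω)) c
    _ ≤ ∫ ω, |(g₁ (X ω) - Y ω) ^ 2 - (g₂ (X ω) - Y ω) ^ 2| ∂μ :=
        integral_abs_sub_le_of_isCondMean hZ₁ hZ₂ hR₁ hR₂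
    _ ≤ ∫ ω, 2 * √B * |g₁ (X ω) - g₂ (X ω)| ∂μ := by
        refine integral_mono_ae (hZ₁.sub hZ₂).abs
          ((hL2.integrable one_le_two).abs.const_mul _) ?_
        filter_upwards [hB₁, hB₂] with ω h₁ h₂
        simpa using abs_sq_sub_sq_le_of_sq_le h₁ h₂
    _ = 2 * √B * ∫ ω, |g₁ (X ω) - g₂ (X ω)| ∂μ := integral_const_mul _ _
    _ ≤ 2 * √B * √(∫ ω, (g₁ (X ω) - g₂ (X ω)) ^ 2 ∂μ) := by
        gcongr
        exact integral_abs_le_sqrt_integral_sq hL2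

end

theorem stmt16_general {Ω : Type*} [MeasurableSpace Ω] {d : ℕ}
    (μ : Measure Ω) [IsProbabilityMeasure μ]
    (X : Ω → EuclideanSpace ℝ (Fin d)) (Y : Ω → ℝ)
    (hX : Measurable X) (hY : Measurable Y)
    (c : ℝ)
    (fstar : EuclideanSpace ℝ (Fin d) → ℝ) (hfstar_m : Measurable fstar)
    (Rstar : EuclideanSpace ℝ (Fin d) → ℝ) (hRstar_m : Measurable Rstar)
    (hRstar : IsCondMean μ X (fun ω => (fstar (X ω) - Y ω) ^ 2) Rstar)
    (f : ℕ → EuclideanSpace ℝ (Fin d) → ℝ) (hf : ∀ n, Measurable (f n))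
    (Rf : ℕ → EuclideanSpace ℝ (Fin d) → ℝ) (hRf_m : ∀ n, Measurable (Rf n))
    (hRf : ∀ n, IsCondMean μ X (fun ω => (f n (X ω) - Y ω) ^ 2) (Rf n))
    (r : ℕ → EuclideanSpace ℝ (Fin d) → ℝ) (hr_m : ∀ n, Measurable (r n))
    (hr01 : ∀ n x, r n x = 0 ∨ r n x = 1)
    -- uniform a.s. bound on the squared losses of the regressors considered
    (B : ℝ)
    (hBn : ∀ n, ∀ᵐ ω ∂μ, (f n (X ω) - Y ω) ^ 2 ≤ B)
    (hBstar : ∀ᵐ ω ∂μ, (fstar (X ω) - Y ω) ^ 2 ≤ B)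
    -- consistency of the regressors and of the rejectors
    (hfconv : Tendsto (fun n => ∫ ω, (f n (X ω) - fstar (X ω)) ^ 2 ∂μ) atTop (nhds 0))
    (hrconv : Tendsto
      (fun n => ∫ ω, (r n (X ω) - (if Rf n (X ω) ≤ c then (1 : ℝ) else 0)) ^ 2 ∂μ)
      atTop (nhds 0)) :
    Tendsto (fun n => LRwR μ X Y c (f n) (r n)) atTop
      (nhds (LRwR μ X Y c fstar (fun x => if Rstar x ≤ c then 1 else 0))) := by
  have hZ n : Integrable (fun ω => (f n (X ω) - Y ω) ^ 2) μ :=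
    integrable_sq_of_ae_sq_le (by fun_prop) (hBn n)
  have hZstar := integrable_sq_of_ae_sq_le (by fun_prop) hBstar
  have hrej : Tendsto (fun n => LRwR μ X Y c (f n) (r n) - ∫ ω, min (Rf n (X ω)) c ∂μ)
      atTop (nhds 0) := by
    rw [tendsto_zero_iff_abs_tendsto_zero]
    refine squeeze_zero (fun n => abs_nonneg _) (fun n => ?_)
      (by simpa using hrconv.const_mul (B + |c|))
    rw [Function.comp_apply, ← LRwR_induced_eq_integral_min hX (hRf_m n) (hZ n) (hRf n)]
    exact abs_LRwR_sub_LRwR_le hX (hr_m n)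
      (.ite (measurableSet_le (hRf_m n) measurable_const) measurable_const measurable_const)
      (hr01 n) (fun x => by split_ifs <;> simp) (hZ n) (hBn n)
  have hmin : Tendsto (fun n => ∫ ω, min (Rf n (X ω)) c ∂μ) atTop
      (nhds (∫ ω, min (Rstar (X ω)) c ∂μ)) := by
    rw [tendsto_iff_dist_tendsto_zero]
    refine squeeze_zero (fun n => dist_nonneg) (fun n => abs_integral_min_sub_integral_min_le
      hX hY (hf n) hfstar_m (hBn n) hBstar (hRf n) hRstar) ?_
    simpa using ((Real.continuous_sqrt.tendsto 0).comp hfconv).const_mul (2 * √B)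
  rw [LRwR_induced_eq_integral_min hX hRstar_m hZstar hRstar]
  simpa using hrej.add hmin

/-- consistency of the regressor–rejector pair. If the squared
losses are uniformly bounded by `B` a.s., `E[(f_n(X) − f*(X))²] → 0` and
`E[(r_n(X) − r_{f_n}(X))²] → 0`, then `L_RwR(f_n, r_n) → L_RwR(f*, r*)`. -/
theorem stmt16 {Ω : Type*} [MeasurableSpace Ω] {d : ℕ}
    (μ : Measure Ω) [IsProbabilityMeasure μ]
    (X : Ω → EuclideanSpace ℝ (Fin d)) (Y : Ω → ℝ)
    (hX : Measurable X) (hY : Measurable Y)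
    (hY2 : Integrable (fun ω => (Y ω) ^ 2) μ)
    (c : ℝ) (hc : 0 < c)
    (fstar : EuclideanSpace ℝ (Fin d) → ℝ) (hfstar_m : Measurable fstar)
    (hfstar : IsCondMean μ X Y fstar)
    (Rstar : EuclideanSpace ℝ (Fin d) → ℝ) (hRstar_m : Measurable Rstar)
    (hRstar : IsCondMean μ X (fun ω => (fstar (X ω) - Y ω) ^ 2) Rstar)
    (f : ℕ → EuclideanSpace ℝ (Fin d) → ℝ) (hf : ∀ n, Measurable (f n))
    (Rf : ℕ → EuclideanSpace ℝ (Fin d) → ℝ) (hRf_m : ∀ n, Measurable (Rf n))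
    (hRf : ∀ n, IsCondMean μ X (fun ω => (f n (X ω) - Y ω) ^ 2) (Rf n))
    (r : ℕ → EuclideanSpace ℝ (Fin d) → ℝ) (hr_m : ∀ n, Measurable (r n))
    (hr01 : ∀ n x, r n x = 0 ∨ r n x = 1)
    -- uniform a.s. bound on the squared losses of the regressors considered
    (B : ℝ)
    (hBn : ∀ n, ∀ᵐ ω ∂μ, (f n (X ω) - Y ω) ^ 2 ≤ B)
    (hBstar : ∀ᵐ ω ∂μ, (fstar (X ω) - Y ω) ^ 2 ≤ B)
    -- consistency of the regressors and of the rejectors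
    (hfconv : Tendsto (fun n => ∫ ω, (f n (X ω) - fstar (X ω)) ^ 2 ∂μ) atTop (nhds 0))
    (hrconv : Tendsto
      (fun n => ∫ ω, (r n (X ω) - (if Rf n (X ω) ≤ c then (1 : ℝ) else 0)) ^ 2 ∂μ)
      atTop (nhds 0)) :
    Tendsto (fun n => LRwR μ X Y c (f n) (r n)) atTop
      (nhds (LRwR μ X Y c fstar (fun x => if Rstar x ≤ c then 1 else 0))) :=
  stmt16_general μ X Y hX hY c fstar hfstar_m Rstar hRstar_m hRstar f hf Rf hRf_m hRf r hr_m hr01 B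
    hBn hBstar hfconv hrconv
end
end
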